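/- arXiv:1302.4788 — 2 statements merged into one kernel-verified Lean document; each statement's English description precedes it below -/
import Mathlib

section
/- For every real α ∈ (0,1) and integer K ≥ 2, define Ψ(K,α) = ∑_{i=0}^{K-1} (1/(K-i)) · ∏_{j=1}^{i} (1 - α/j)/(1 + α/(K-j)). Then Ψ(K,α) = Γ(α)·(K-1)!/Γ(K+α) - Γ(α)·Γ(K+1-α)/(K·Γ(1-α)·Γ(K+α)). -/
/-!
Each summand of `Ψ(K, α)` is a hypergeometric term: by comparing consecutive ratios it equals
`C(K, i) (1 - α)_i (α)_(K-i) / (K (α)_K)` in rising factorials. The Chu–Vandermonde identity for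
rising factorials, applied to `(1 - α) + α = 1`, sums these terms over `0 ≤ i ≤ K` to
`(1)_K = K!`, so the sum over `i < K` is `K! - (1 - α)_K`. Finally `(x)_K = Γ(x + K) / Γ(x)`.
-/

open Finset Polynomial Nat

theorem Polynomial.ascPochhammer_eval_add {R : Type*} [CommSemiring R] (a b : R) (k : ℕ) :
    (ascPochhammer R k).eval (a + b) = ∑ ij ∈ antidiagonal k,
      (k.choose ij.1 : R) * ((ascPochhammer R ij.1).eval a * (ascPochhammer R ij.2).eval b) := by
  induction k with
  | zero => simp
  | succ k ih =>
    rw [ascPochhammer_succ_eval, ih, sum_mul,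
      sum_antidiagonal_choose_succ_mul fun i j =>
        (ascPochhammer R i).eval a * (ascPochhammer R j).eval b,
      ← sum_add_distrib]
    refine sum_congr rfl fun ij hij => ?_
    rw [HasAntidiagonal.mem_antidiagonal] at hij
    rw [Nat.choose_symm_of_eq_add hij.symm, ascPochhammer_succ_eval, ascPochhammer_succ_eval,
      ← hij]
    push_cast
    ring

theorem sum_range_choose_mul_ascPochhammer_one_sub {R : Type*} [CommRing R] (a : R) (K : ℕ) :
    ∑ i ∈ range K, (K.choose i : R) *
        ((ascPochhammer R i).eval (1 - a) * (ascPochhammer R (K - i)).eval a) =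
      (K ! : R) - (ascPochhammer R K).eval (1 - a) := by
  have h := ascPochhammer_eval_add (1 - a) a K
  rw [sub_add_cancel, ascPochhammer_eval_one, Nat.sum_antidiagonal_eq_sum_range_succ_mk,
    sum_range_succ] at h
  simp [h]

theorem one_div_sub_mul_prod_eq_choose_mul_ascPochhammer {𝕜 : Type*} [Field 𝕜] [CharZero 𝕜]
    {α : 𝕜} {K : ℕ} (hα : (ascPochhammer 𝕜 K).eval α ≠ 0) {i : ℕ} (hi : i < K) :
    1 / ((K : 𝕜) - i) * ∏ j ∈ Icc 1 i, ((1 - α / j) / (1 + α / ((K : 𝕜) - j))) =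
      K.choose i * ((ascPochhammer 𝕜 i).eval (1 - α) * (ascPochhammer 𝕜 (K - i)).eval α) /
        (K * (ascPochhammer 𝕜 K).eval α) := by
  induction i with
  | zero => simp [div_mul_cancel_right₀ hα]
  | succ i ih =>
    have hK : (K : 𝕜) ≠ 0 := by exact_mod_cast (by omega : K ≠ 0)
    have hKi : (K : 𝕜) - i ≠ 0 := sub_ne_zero.2 (by exact_mod_cast (by omega : K ≠ i))
    have hKi' : (K : 𝕜) - (i + 1) ≠ 0 := sub_ne_zero.2 (by exact_mod_cast (by omega : K ≠ i + 1))
    have hαK : (K : 𝕜) - (i + 1) + α ≠ 0 := by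
      intro h
      refine hα ((ascPochhammer_eval_eq_zero_iff _ _).2 ⟨K - (i + 1), by omega, ?_⟩)
      rw [Nat.cast_sub (by omega)]
      push_cast
      linear_combination h
    have hchoose : (K.choose (i + 1) : 𝕜) * (i + 1) = K.choose i * (K - i) := by
      rw [← Nat.cast_sub (by omega : i ≤ K)]
      exact_mod_cast Nat.choose_succ_right_eq K i
    have hprev := ih (by omega)
    rw [show K - i = K - (i + 1) + 1 by omega, ascPochhammer_succ_eval,
      Nat.cast_sub (by omega)] at hprev
    push_cast at hprev
    rw [prod_Icc_succ_top (by omega), ← mul_assoc, ascPochhammer_succ_eval i]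
    set P := ∏ j ∈ Icc 1 i, ((1 - α / j) / (1 + α / ((K : 𝕜) - j)))
    set A := (ascPochhammer 𝕜 i).eval (1 - α)
    set B := (ascPochhammer 𝕜 (K - (i + 1))).eval α
    have hP : P = (K - i) * (K.choose i * (A * (B * (α + (K - (i + 1))))) /
        (K * (ascPochhammer 𝕜 K).eval α)) := by
      rw [← hprev]; field_simp
    rw [hP]
    push_cast
    field_simp
    linear_combination (-(A * B * (α + (K - (i + 1))) * (i + 1 - α))) * hchoose

theorem Real.Gamma_add_nat_eq_ascPochhammer_mul {x : ℝ} (hx : ∀ m : ℕ, x ≠ -m) (n : ℕ) :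
    Real.Gamma (x + n) = (ascPochhammer ℝ n).eval x * Real.Gamma x := by
  induction n with
  | zero => simp
  | succ n ih =>
    have hxn : x + n ≠ 0 := fun h => hx n (by linarith)
    rw [Nat.cast_succ, ← add_assoc, Real.Gamma_add_one hxn, ih, ascPochhammer_succ_eval]
    ring

theorem Psi_closed_form (α : ℝ) (hα0 : 0 < α) (hα1 : α < 1) (K : ℕ) (hK : 2 ≤ K) :
    ∑ i ∈ Finset.range K, (1 / ((K : ℝ) - (i : ℝ))) *
        ∏ j ∈ Finset.Icc 1 i, ((1 - α / (j : ℝ)) / (1 + α / ((K : ℝ) - (j : ℝ)))) =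
      Real.Gamma α * ((K - 1).factorial : ℝ) / Real.Gamma ((K : ℝ) + α) -
        Real.Gamma α * Real.Gamma ((K : ℝ) + 1 - α) /
          ((K : ℝ) * Real.Gamma (1 - α) * Real.Gamma ((K : ℝ) + α)) := by
  have hβ0 : 0 < 1 - α := by linarith
  have hK0 : (K : ℝ) ≠ 0 := by exact_mod_cast (by omega : K ≠ 0)
  have hPα : (ascPochhammer ℝ K).eval α ≠ 0 := (ascPochhammer_pos K α hα0).ne'
  have hΓα : Real.Gamma (α + K) = (ascPochhammer ℝ K).eval α * Real.Gamma α :=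
    Real.Gamma_add_nat_eq_ascPochhammer_mul (fun m h => by linarith [m.cast_nonneg (α := ℝ)]) K
  have hΓβ : Real.Gamma (1 - α + K) = (ascPochhammer ℝ K).eval (1 - α) * Real.Gamma (1 - α) :=
    Real.Gamma_add_nat_eq_ascPochhammer_mul (fun m h => by linarith [m.cast_nonneg (α := ℝ)]) K
  calc _ = ∑ i ∈ range K, K.choose i * ((ascPochhammer ℝ i).eval (1 - α) *
          (ascPochhammer ℝ (K - i)).eval α) / (K * (ascPochhammer ℝ K).eval α) :=
        sum_congr rfl fun i hi =>
          one_div_sub_mul_prod_eq_choose_mul_ascPochhammer hPα (mem_range.1 hi)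
    _ = ((K ! : ℝ) - (ascPochhammer ℝ K).eval (1 - α)) / (K * (ascPochhammer ℝ K).eval α) := by
        rw [← sum_div, sum_range_choose_mul_ascPochhammer_one_sub]
    _ = _ := by
        rw [add_comm (K : ℝ) α, hΓα, show (K : ℝ) + 1 - α = 1 - α + K by ring, hΓβ,
          ← Nat.mul_factorial_pred (by omega : K ≠ 0)]
        have := (Real.Gamma_pos_of_pos hα0).ne'
        have := (Real.Gamma_pos_of_pos hβ0).ne'
        push_cast
        field_simp
end

section
/- Let K ≥ 3 and L ≥ 3 be integers, let Λ(j) = ((K-j)((L-1)(j+1)-1))/((j+1)((L-1)(K-j)+1)), and define the normalized hop durations: T̄^(K) = ∑_{i=1}^{K} (1/((L-1)(K-i)+1))·∏_{j=1}^{i-1} Λ(j), and for 1 ≤ k ≤ K-1, T̄^(k) = (1/(K(L-1)))·∑_{i=1}^{k-1} ∏_{j=1}^{i-1} Λ(j) + ((K(L-1)+1)/(K·L·(L-1)))·∏_{j=1}^{k-1} Λ(j) + (1/K)·∏_{j=1}^{k} Λ(j). Then for every 2 ≤ k ≤ K-1, T̄^(k) < T̄^(1) + T̄^(K). -/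
/-!
Write `P n = ∏_{j=1}^{n} Λ(j)` and `c = (K(L-1)+1)/(K L (L-1))`, so that
`T̄^(1) = c + Λ(1)/K`. Since `0 < Λ(j) < 1`, the partial products are positive and
`P n ≤ Λ(1) < 1` for `n ≥ 1`. Hence, for `2 ≤ k ≤ K-1`, the middle term `c P(k-1)` of `T̄^(k)` is
below `c`, its last term `P k / K` is at most `Λ(1)/K`, and its first term is at most `T̄^(K)`:
the weight `1/(K(L-1))` is at most every weight `1/((L-1)(K-i)+1)` of `T̄^(K)`, and `T̄^(K)` has
only further nonnegative terms.
-/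

open Finset

lemma mul_sub_one_div_mul_add_one_mem_Ioo {a b m : ℝ} (ha : 0 < a) (hb : 0 < b)
    (hmb : 1 < m * b) : a * (m * b - 1) / (b * (m * a + 1)) ∈ Set.Ioo 0 1 := by
  have hden : 0 < b * (m * a + 1) := mul_pos hb (by nlinarith)
  refine ⟨div_pos (mul_pos ha (by linarith)) hden, (div_lt_one hden).2 ?_⟩
  nlinarith

lemma hop_ratio_mem_Ioo {K L j : ℕ} (hL : 2 ≤ L) (hj : 1 ≤ j) (hjK : j < K) :
    ((K : ℝ) - j) * (((L : ℝ) - 1) * ((j : ℝ) + 1) - 1) /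
      (((j : ℝ) + 1) * (((L : ℝ) - 1) * ((K : ℝ) - j) + 1)) ∈ Set.Ioo 0 1 := by
  have hLr : (2 : ℝ) ≤ L := by exact_mod_cast hL
  have hjr : (1 : ℝ) ≤ j := by exact_mod_cast hj
  have hjKr : (j : ℝ) + 1 ≤ K := by exact_mod_cast hjK
  exact mul_sub_one_div_mul_add_one_mem_Ioo (by linarith) (by linarith) (by nlinarith)

lemma one_div_le_hop_weight {K L i : ℕ} (hL : 2 ≤ L) (hi : 1 ≤ i) (hiK : i ≤ K) :
    1 / ((K : ℝ) * ((L : ℝ) - 1)) ≤ 1 / (((L : ℝ) - 1) * ((K : ℝ) - i) + 1) := by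
  have hLr : (2 : ℝ) ≤ L := by exact_mod_cast hL
  have hir : (1 : ℝ) ≤ i := by exact_mod_cast hi
  have hiKr : (i : ℝ) ≤ K := by exact_mod_cast hiK
  exact one_div_le_one_div_of_le (by nlinarith) (by nlinarith)

lemma Finset.prod_Icc_one_le_apply_one {R : Type*} [CommMonoidWithZero R] [PartialOrder R]
    [ZeroLEOneClass R] [PosMulMono R] {f : ℕ → R} {n : ℕ} (hn : 1 ≤ n)
    (hf₀ : ∀ j ∈ Icc 1 n, 0 ≤ f j) (hf₁ : ∀ j ∈ Icc 1 n, f j ≤ 1) :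
    ∏ j ∈ Icc 1 n, f j ≤ f 1 := by
  simpa using prod_le_prod_of_subset_of_le_one
    (singleton_subset_iff.2 (mem_Icc.2 ⟨le_rfl, hn⟩)) hf₀ fun j hj _ ↦ hf₁ j hj

lemma Finset.mul_sum_Icc_le_sum_Icc_mul {f w : ℕ → ℝ} {c : ℝ} {n N : ℕ} (hnN : n ≤ N)
    (hc : 0 ≤ c) (hf : ∀ i ∈ Icc 1 N, 0 ≤ f i) (hw : ∀ i ∈ Icc 1 N, c ≤ w i) :
    c * ∑ i ∈ Icc 1 n, f i ≤ ∑ i ∈ Icc 1 N, w i * f i := by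
  have hsub : Icc 1 n ⊆ Icc 1 N := Icc_subset_Icc_right hnN
  rw [mul_sum]
  calc ∑ i ∈ Icc 1 n, c * f i
      ≤ ∑ i ∈ Icc 1 n, w i * f i :=
        sum_le_sum fun i hi ↦ mul_le_mul_of_nonneg_right (hw i (hsub hi)) (hf i (hsub hi))
    _ ≤ ∑ i ∈ Icc 1 N, w i * f i :=
        sum_le_sum_of_subset_of_nonneg hsub fun i hi _ ↦
          mul_nonneg (hc.trans (hw i hi)) (hf i hi)

theorem hop_duration_bound_general (K L : ℕ) (hL : 3 ≤ L)
    (Λ : ℕ → ℝ)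
    (hΛ : ∀ j : ℕ, Λ j = (((K : ℝ) - j) * (((L : ℝ) - 1) * ((j : ℝ) + 1) - 1)) /
        (((j : ℝ) + 1) * (((L : ℝ) - 1) * ((K : ℝ) - (j : ℝ)) + 1)))
    (TbarK : ℝ)
    (hTK : TbarK = ∑ i ∈ Finset.Icc 1 K,
        (1 / (((L : ℝ) - 1) * ((K : ℝ) - (i : ℝ)) + 1)) * ∏ j ∈ Finset.Icc 1 (i - 1), Λ j)
    (Tbar : ℕ → ℝ)
    (hT : ∀ k : ℕ, 1 ≤ k → k ≤ K - 1 →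
        Tbar k = (1 / ((K : ℝ) * ((L : ℝ) - 1))) *
            (∑ i ∈ Finset.Icc 1 (k - 1), ∏ j ∈ Finset.Icc 1 (i - 1), Λ j) +
          (((K : ℝ) * ((L : ℝ) - 1) + 1) / ((K : ℝ) * (L : ℝ) * ((L : ℝ) - 1))) *
            ∏ j ∈ Finset.Icc 1 (k - 1), Λ j +
          (1 / (K : ℝ)) * ∏ j ∈ Finset.Icc 1 k, Λ j) :
    ∀ k : ℕ, 2 ≤ k → k ≤ K - 1 → Tbar k < Tbar 1 + TbarK := by
  intro k hk2 hkK
  have hΛ_mem (j) (hj : j ∈ Icc 1 (K - 1)) : Λ j ∈ Set.Ioo 0 1 := by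
    obtain ⟨hj1, hjK⟩ := mem_Icc.1 hj
    exact hΛ j ▸ hop_ratio_mem_Ioo (by omega) hj1 (by omega)
  have hP_pos (n) (hn : n ≤ K - 1) : 0 < ∏ j ∈ Icc 1 n, Λ j :=
    prod_pos fun j hj ↦ (hΛ_mem j (Icc_subset_Icc_right hn hj)).1
  have hP_le (n) (h1 : 1 ≤ n) (hn : n ≤ K - 1) : ∏ j ∈ Icc 1 n, Λ j ≤ Λ 1 :=
    prod_Icc_one_le_apply_one h1 (fun j hj ↦ (hΛ_mem j (Icc_subset_Icc_right hn hj)).1.le)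
      fun j hj ↦ (hΛ_mem j (Icc_subset_Icc_right hn hj)).2.le
  have hLr : (3 : ℝ) ≤ L := by exact_mod_cast hL
  have hKr : (3 : ℝ) ≤ K := by exact_mod_cast (by omega : 3 ≤ K)
  have hfirst : 1 / ((K : ℝ) * (L - 1)) * ∑ i ∈ Icc 1 (k - 1), ∏ j ∈ Icc 1 (i - 1), Λ j ≤ TbarK :=
    hTK ▸ mul_sum_Icc_le_sum_Icc_mul (by omega) (one_div_nonneg.2 (by nlinarith))
      (fun i hi ↦ (hP_pos (i - 1) (Nat.sub_le_sub_right (mem_Icc.1 hi).2 1)).le)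
      fun i hi ↦ one_div_le_hop_weight (by omega) (mem_Icc.1 hi).1 (mem_Icc.1 hi).2
  have hmid : ((K : ℝ) * (L - 1) + 1) / (K * L * (L - 1)) * ∏ j ∈ Icc 1 (k - 1), Λ j <
      ((K : ℝ) * (L - 1) + 1) / (K * L * (L - 1)) :=
    mul_lt_of_lt_one_right (div_pos (by nlinarith) (mul_pos (by positivity) (by linarith)))
      ((hP_le (k - 1) (by omega) (by omega)).trans_lt (hΛ_mem 1 (mem_Icc.2 ⟨le_rfl, by omega⟩)).2)
  have hlast : 1 / (K : ℝ) * ∏ j ∈ Icc 1 k, Λ j ≤ 1 / K * Λ 1 :=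
    mul_le_mul_of_nonneg_left (hP_le k (by omega) hkK) (by positivity)
  rw [hT k (by omega) hkK, hT 1 le_rfl (by omega)]
  simp only [Nat.sub_self, Icc_self, prod_singleton, Icc_eq_empty_of_lt zero_lt_one, sum_empty,
    prod_empty, mul_zero, mul_one, zero_add]
  linarith

theorem hop_duration_bound (K L : ℕ) (hK : 3 ≤ K) (hL : 3 ≤ L)
    (Λ : ℕ → ℝ)
    (hΛ : ∀ j : ℕ, Λ j = (((K : ℝ) - j) * (((L : ℝ) - 1) * ((j : ℝ) + 1) - 1)) /
        (((j : ℝ) + 1) * (((L : ℝ) - 1) * ((K : ℝ) - (j : ℝ)) + 1)))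
    (TbarK : ℝ)
    (hTK : TbarK = ∑ i ∈ Finset.Icc 1 K,
        (1 / (((L : ℝ) - 1) * ((K : ℝ) - (i : ℝ)) + 1)) * ∏ j ∈ Finset.Icc 1 (i - 1), Λ j)
    (Tbar : ℕ → ℝ)
    (hT : ∀ k : ℕ, 1 ≤ k → k ≤ K - 1 →
        Tbar k = (1 / ((K : ℝ) * ((L : ℝ) - 1))) *
            (∑ i ∈ Finset.Icc 1 (k - 1), ∏ j ∈ Finset.Icc 1 (i - 1), Λ j) +
          (((K : ℝ) * ((L : ℝ) - 1) + 1) / ((K : ℝ) * (L : ℝ) * ((L : ℝ) - 1))) *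
            ∏ j ∈ Finset.Icc 1 (k - 1), Λ j +
          (1 / (K : ℝ)) * ∏ j ∈ Finset.Icc 1 k, Λ j) :
    ∀ k : ℕ, 2 ≤ k → k ≤ K - 1 → Tbar k < Tbar 1 + TbarK :=
  hop_duration_bound_general K L hL Λ hΛ TbarK hTK Tbar hT
end
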